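/- Let X be a real reflexive Banach space and T : X → X* a monotone, coercive, bounded, and hemicontinuous operator. Then for every b ∈ X* there exists u ∈ X with T(u) = b; moreover if T is strictly monotone, the solution is unique. -/

import Mathlib

/-!
Galerkin's method. On each finite-dimensional subspace `V` the restricted equation has a
solution `u_V`; coercivity bounds these uniformly, reflexivity gives a weak cluster point `u`, and
monotonicity passes `0 ≤ (b - T v) (u_V - v)` to the limit. Minty's trick (test with `v = u - t w`,
let `t → 0⁺` using hemicontinuity) then turns this variational inequality into `T u = b`.
Monotonicity and local boundedness upgrade hemicontinuity to continuity of `y ↦ T y w`, which is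
what makes the finite-dimensional problems continuous.

In finite dimensions Brouwer's theorem is replaced by an induction on the dimension: for a
strongly monotone continuous `g`, solve the equation on each slice `t • e + (ℝ ∙ e)ᗮ` by induction;
the component of the residual along `e` is then a continuous, strictly increasing function of `t`,
and the intermediate value theorem picks the slice on which it vanishes. A monotone coercive `g`
is handled by solving `(k + 1) • g x + x = 0` and letting `k → ∞`.
-/

open Filter Topology Module Submodule
open scoped RealInnerProductSpace

theorem surjective_of_sq_sub_le_mul_sub {φ : ℝ → ℝ} (hc : Continuous φ)
    (h : ∀ s t, (t - s) ^ 2 ≤ (t - s) * (φ t - φ s)) : Function.Surjective φ := by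
  have hgrow : ∀ s t, s < t → t - s ≤ φ t - φ s := fun s t hst =>
    le_of_mul_le_mul_left (by nlinarith [h s t]) (sub_pos.2 hst)
  refine hc.surjective (tendsto_atTop_mono' _ ?_ (tendsto_atTop_add_const_right _ (φ 0) tendsto_id))
    (tendsto_atBot_mono' _ ?_ (tendsto_atBot_add_const_right _ (φ 0) tendsto_id))
  · filter_upwards [eventually_gt_atTop 0] with t ht
    exact (by linarith [hgrow 0 t ht] : t + φ 0 ≤ φ t)
  · filter_upwards [eventually_lt_atBot 0] with t ht
    exact (by linarith [hgrow t 0 ht] : φ t ≤ t + φ 0)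

section StronglyMonotone

variable {E : Type*} [NormedAddCommGroup E] [InnerProductSpace ℝ E]

def IsStronglyMonotone (g : E → E) : Prop :=
  ∀ x y, ‖x - y‖ ^ 2 ≤ ⟪g x - g y, x - y⟫

theorem IsStronglyMonotone.norm_sub_le {g : E → E} (hg : IsStronglyMonotone g) (x y : E) :
    ‖x - y‖ ≤ ‖g x - g y‖ := by
  have := (hg x y).trans (real_inner_le_norm _ _)
  nlinarith [norm_nonneg (x - y), norm_nonneg (g x - g y)]

theorem continuous_of_isStronglyMonotone_of_apply_eq {P : Type*} [TopologicalSpace P]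
    {G : P → E → E} (hG : ∀ p, IsStronglyMonotone (G p)) (hc : ∀ x, Continuous fun p => G p x)
    {v : P → E} {c : E} (hv : ∀ p, G p (v p) = c) : Continuous v := by
  refine continuous_iff_continuousAt.2 fun p₀ => tendsto_iff_norm_sub_tendsto_zero.2 ?_
  have hlim : Tendsto (fun p => ‖G p₀ (v p₀) - G p (v p₀)‖) (𝓝 p₀) (𝓝 0) := by
    simpa using ((hc (v p₀)).tendsto p₀).const_sub (G p₀ (v p₀)) |>.norm
  refine squeeze_zero (fun _ => norm_nonneg _) (fun p => ?_) hlim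
  calc ‖v p - v p₀‖ ≤ ‖G p (v p) - G p (v p₀)‖ := (hG p).norm_sub_le _ _
    _ = ‖G p₀ (v p₀) - G p (v p₀)‖ := by rw [hv, hv]

theorem IsStronglyMonotone.orthogonalProjectionOnto_comp {g : E → E} (hg : IsStronglyMonotone g)
    (K : Submodule ℝ E) [K.HasOrthogonalProjection] (a : E) :
    IsStronglyMonotone fun v : K => K.orthogonalProjectionOnto (g (v + a)) := by
  intro v w
  have hsub : ((v : E) + a) - ((w : E) + a) = ((v - w : K) : E) := by simp
  have := hg (v + a) (w + a)
  rw [hsub] at this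
  rwa [← map_sub, inner_orthogonalProjectionOnto_eq_of_mem_right]

theorem IsStronglyMonotone.sq_sub_le_mul_sub {g : E → E} (hg : IsStronglyMonotone g) {e : E}
    (he : ‖e‖ = 1) {v : ℝ → (ℝ ∙ e)ᗮ} {c : (ℝ ∙ e)ᗮ}
    (hv : ∀ t, (ℝ ∙ e)ᗮ.orthogonalProjectionOnto (g (v t + t • e)) = c) (s t : ℝ) :
    (t - s) ^ 2 ≤ (t - s) * (⟪g (v t + t • e), e⟫ - ⟪g (v s + s • e), e⟫) := by
  set x : ℝ → E := fun t => v t + t • e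
  have hve : ⟪((v t - v s : (ℝ ∙ e)ᗮ) : E), e⟫ = 0 :=
    mem_orthogonal_singleton_iff_inner_left.1 (v t - v s).2
  have hdiff : x t - x s = ((v t - v s : (ℝ ∙ e)ᗮ) : E) + (t - s) • e := by
    simp only [x, Submodule.coe_sub, sub_smul]; abel
  have hproj : ⟪g (x t) - g (x s), ((v t - v s : (ℝ ∙ e)ᗮ) : E)⟫ = 0 := by
    rw [← inner_orthogonalProjectionOnto_eq_of_mem_right, map_sub, hv, hv, sub_self,
      inner_zero_left]
  have hnorm : ‖x t - x s‖ ^ 2 = ‖((v t - v s : (ℝ ∙ e)ᗮ) : E)‖ ^ 2 + (t - s) ^ 2 := by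
    rw [hdiff, norm_add_sq_real, inner_smul_right, hve, norm_smul, he, Real.norm_eq_abs, mul_one,
      sq_abs]
    ring
  calc (t - s) ^ 2 ≤ ‖x t - x s‖ ^ 2 := by
        rw [hnorm]; exact le_add_of_nonneg_left (sq_nonneg _)
    _ ≤ ⟪g (x t) - g (x s), x t - x s⟫ := hg _ _
    _ = (t - s) * (⟪g (x t), e⟫ - ⟪g (x s), e⟫) := by
      rw [hdiff, inner_add_right, hproj, inner_smul_right, inner_sub_left, zero_add]

theorem IsStronglyMonotone.surjective_of_orthogonal [FiniteDimensional ℝ E] {g : E → E}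
    (hg : IsStronglyMonotone g) (hc : Continuous g) {e : E} (he : ‖e‖ = 1)
    (ih : ∀ G : (ℝ ∙ e)ᗮ → (ℝ ∙ e)ᗮ, Continuous G → IsStronglyMonotone G → G.Surjective) :
    g.Surjective := by
  intro b
  set P := (ℝ ∙ e)ᗮ.orthogonalProjectionOnto
  have hslice : ∀ t : ℝ, IsStronglyMonotone fun v : (ℝ ∙ e)ᗮ => P (g (v + t • e)) :=
    fun t => hg.orthogonalProjectionOnto_comp _ _
  choose v hv using fun t => ih _ (by fun_prop) (hslice t) (P b)
  beta_reduce at hv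
  have hvc : Continuous v :=
    continuous_of_isStronglyMonotone_of_apply_eq hslice (fun _ => by fun_prop) hv
  obtain ⟨t, ht⟩ := surjective_of_sq_sub_le_mul_sub (φ := fun t => ⟪g (v t + t • e), e⟫)
    (by fun_prop) (hg.sq_sub_le_mul_sub he hv) ⟪b, e⟫
  refine ⟨v t + t • e, sub_eq_zero.1 ?_⟩
  have h₁ : g (v t + t • e) - b ∈ (ℝ ∙ e)ᗮᗮ := by
    rw [← orthogonalProjectionOnto_eq_zero_iff, map_sub, hv, sub_self]
  have h₂ : g (v t + t • e) - b ∈ (ℝ ∙ e)ᗮ := by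
    rw [mem_orthogonal_singleton_iff_inner_left, inner_sub_left, ← ht, sub_self]
  simpa using (inf_orthogonal_eq_bot (ℝ ∙ e)ᗮ).le ⟨h₂, h₁⟩

theorem IsStronglyMonotone.surjective [FiniteDimensional ℝ E] {g : E → E}
    (hg : IsStronglyMonotone g) (hc : Continuous g) : g.Surjective := by
  obtain ⟨n, hn⟩ : ∃ n, finrank ℝ E = n := ⟨_, rfl⟩
  induction n generalizing E with
  | zero =>
    have := finrank_zero_iff.1 hn
    exact fun b => ⟨b, Subsingleton.elim _ _⟩
  | succ n ih =>
    have := Module.nontrivial_of_finrank_eq_succ hn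
    obtain ⟨e, he⟩ := exists_norm_eq E zero_le_one
    refine hg.surjective_of_orthogonal hc he fun G hGc hG => ih hG hGc ?_
    have := (ℝ ∙ e).finrank_add_finrank_orthogonal
    rw [finrank_span_singleton (norm_ne_zero_iff.1 (he.trans_ne one_ne_zero))] at this
    omega

theorem exists_eq_zero_of_monotone [FiniteDimensional ℝ E] {g : E → E} (hc : Continuous g)
    (hm : ∀ x y, 0 ≤ ⟪g x - g y, x - y⟫) (hcoer : ∀ᶠ x in cocompact E, 0 ≤ ⟪g x, x⟫) :
    ∃ x, g x = 0 := by
  have hreg : ∀ k : ℕ, IsStronglyMonotone fun x => (k + 1 : ℝ) • g x + x := by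
    intro k x y
    have hsub : (k + 1 : ℝ) • g x + x - ((k + 1 : ℝ) • g y + y) =
        (k + 1 : ℝ) • (g x - g y) + (x - y) := by
      rw [smul_sub]; abel
    rw [hsub, inner_add_left, real_inner_smul_left, real_inner_self_eq_norm_sq]
    nlinarith [hm x y]
  choose x hx using fun k : ℕ => (hreg k).surjective (by fun_prop) 0
  have hgx : ∀ k, g (x k) = -(k + 1 : ℝ)⁻¹ • x k := by
    intro k
    rw [neg_smul, eq_neg_iff_add_eq_zero,
      ← smul_eq_zero_iff_right (by positivity : (k + 1 : ℝ) ≠ 0), smul_add, smul_smul,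
      mul_inv_cancel₀ (by positivity), one_smul]
    exact hx k
  obtain ⟨K, hK, hKc⟩ := mem_cocompact.1 hcoer
  have hxK : ∀ k, x k ∈ insert 0 K := by
    intro k
    by_contra hk
    rw [Set.mem_insert_iff, not_or] at hk
    have := hKc hk.2
    rw [Set.mem_ofPred_eq, hgx, real_inner_smul_left, real_inner_self_eq_norm_sq] at this
    have : 0 < (k + 1 : ℝ)⁻¹ * ‖x k‖ ^ 2 := by have := norm_pos_iff.2 hk.1; positivity
    linarith
  obtain ⟨a, -, ψ, hψ, hlim⟩ := (hK.insert 0).tendsto_subseq hxK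
  refine ⟨a, tendsto_nhds_unique ((hc.tendsto a).comp hlim) ?_⟩
  have hinv : Tendsto (fun j => -((ψ j : ℝ) + 1)⁻¹) atTop (𝓝 0) := by
    simpa using (tendsto_one_div_add_atTop_nhds_zero_nat (𝕜 := ℝ) |>.comp hψ.tendsto_atTop).neg
  simpa [Function.comp_def, hgx] using hinv.smul hlim

end StronglyMonotone

theorem exists_eq_zero_of_monotone_strongDual {V : Type*} [NormedAddCommGroup V] [NormedSpace ℝ V]
    [FiniteDimensional ℝ V] {F : V → StrongDual ℝ V} (hc : ∀ w, Continuous fun x => F x w)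
    (hm : ∀ x y, 0 ≤ F x (x - y) - F y (x - y)) (hcoer : ∀ᶠ x in cocompact V, 0 ≤ F x x) :
    ∃ x, F x = 0 := by
  let ℓ : EuclideanSpace ℝ (Fin (finrank ℝ V)) ≃L[ℝ] V :=
    ContinuousLinearEquiv.ofFinrankEq finrank_euclideanSpace_fin
  let g := fun x => (InnerProductSpace.toDual ℝ _).symm ((F (ℓ x)).comp ℓ.toContinuousLinearMap)
  have hg : ∀ x y, ⟪g x, y⟫ = F (ℓ x) (ℓ y) := fun _ _ => InnerProductSpace.toDual_symm_apply
  obtain ⟨x, hx⟩ := exists_eq_zero_of_monotone (g := g)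
    ((InnerProductSpace.toDual ℝ _).symm.continuous.comp
      (continuous_clm_apply.2 fun y => (hc (ℓ y)).comp ℓ.continuous))
    (fun x y => by simpa only [inner_sub_left, hg, map_sub] using hm (ℓ x) (ℓ y))
    ((ℓ.toHomeomorph.isClosedEmbedding.tendsto_cocompact.eventually hcoer).mono
      fun x hx => by rwa [hg])
  refine ⟨ℓ x, ContinuousLinearMap.ext fun w => ?_⟩
  simpa [hx] using (hg x (ℓ.symm w)).symm

section MonotoneOperator

variable {X : Type*} [NormedAddCommGroup X] [NormedSpace ℝ X] {T : X → StrongDual ℝ X}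

theorem tendsto_apply_sub_of_bounded (hbnd : ∀ r : ℝ, ∃ M : ℝ, ∀ u : X, ‖u‖ ≤ r → ‖T u‖ ≤ M)
    (x : X) : Tendsto (fun y => T y (y - x)) (𝓝 x) (𝓝 0) := by
  obtain ⟨M, hM⟩ := hbnd (‖x‖ + 1)
  have hnear : ∀ᶠ y in 𝓝 x, ‖y‖ ≤ ‖x‖ + 1 :=
    (continuous_norm.tendsto x).eventually (eventually_le_nhds (lt_add_one _))
  have hlim : Tendsto (fun y => M * ‖y - x‖) (𝓝 x) (𝓝 0) := by
    simpa using ((continuous_sub_right x).norm.tendsto x).const_mul M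
  refine squeeze_zero_norm' ?_ hlim
  filter_upwards [hnear] with y hy
  exact (T y).le_opNorm _ |>.trans (mul_le_mul_of_nonneg_right (hM y hy) (norm_nonneg _))

theorem eventually_apply_lt_of_monotone (hmono : ∀ u v : X, 0 ≤ T u (u - v) - T v (u - v))
    (hbnd : ∀ r : ℝ, ∃ M : ℝ, ∀ u : X, ‖u‖ ≤ r → ‖T u‖ ≤ M)
    (hhemi : ∀ u v w : X, Continuous (fun t : ℝ => T (u + t • v) w)) {x w : X} {a : ℝ}
    (ha : T x w < a) : ∀ᶠ y in 𝓝 x, T y w < a := by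
  obtain ⟨t, ht, htw⟩ : ∃ t : ℝ, 0 < t ∧ T (x + t • w) w < (T x w + a) / 2 := by
    have h : Tendsto (fun t : ℝ => T (x + t • w) w) (𝓝[>] 0) (𝓝 (T x w)) := by
      simpa using ((hhemi x w w).tendsto 0).mono_left nhdsWithin_le_nhds
    exact ((h.eventually (gt_mem_nhds (by linarith))).and self_mem_nhdsWithin).exists.imp
      fun t ht => ⟨ht.2, ht.1⟩
  have hlim : Tendsto (fun y => T y (y - x) - T (x + t • w) (y - x)) (𝓝 x) (𝓝 0) := by
    simpa using (tendsto_apply_sub_of_bounded hbnd x).sub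
      (((T (x + t • w)).continuous.comp (continuous_sub_right x)).tendsto x)
  -- monotonicity against `x + t • w`:
  -- `t * T y w ≤ t * T (x + t • w) w + (T y - T (x + t • w)) (y - x)`
  filter_upwards [hlim.eventually (gt_mem_nhds (show 0 < t * ((a - T x w) / 2) by
    nlinarith))] with y hy
  have hm := hmono y (x + t • w)
  rw [show y - (x + t • w) = (y - x) - t • w by abel] at hm
  simp only [map_sub, map_smul, smul_eq_mul] at hm hy
  exact lt_of_mul_lt_mul_left (by nlinarith) ht.le

theorem continuous_apply_of_monotone (hmono : ∀ u v : X, 0 ≤ T u (u - v) - T v (u - v))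
    (hbnd : ∀ r : ℝ, ∃ M : ℝ, ∀ u : X, ‖u‖ ≤ r → ‖T u‖ ≤ M)
    (hhemi : ∀ u v w : X, Continuous (fun t : ℝ => T (u + t • v) w)) (w : X) :
    Continuous fun y => T y w := by
  refine continuous_iff_continuousAt.2 fun x => tendsto_order.2 ⟨fun a ha => ?_,
    fun a ha => eventually_apply_lt_of_monotone hmono hbnd hhemi ha⟩
  have := eventually_apply_lt_of_monotone hmono hbnd hhemi (w := -w) (a := -a)
    (by simpa using ha)
  exact this.mono fun y hy => by simpa using hy

theorem eq_of_forall_apply_sub_nonneg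
    (hhemi : ∀ u v w : X, Continuous (fun t : ℝ => T (u + t • v) w)) {u : X}
    {b : StrongDual ℝ X} (h : ∀ v, 0 ≤ (b - T v) (u - v)) : T u = b := by
  have hle : ∀ w, T u w ≤ b w := by
    intro w
    have hlim : Tendsto (fun t : ℝ => T (u + t • -w) w) (𝓝[>] 0) (𝓝 (T u w)) := by
      simpa using ((hhemi u (-w) w).tendsto 0).mono_left nhdsWithin_le_nhds
    refine le_of_tendsto hlim ?_
    filter_upwards [self_mem_nhdsWithin] with t (ht : 0 < t)
    have := h (u + t • -w)
    rw [show u - (u + t • -w) = t • w by simp, map_smul, smul_eq_mul] at this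
    simpa using nonneg_of_mul_nonneg_right this ht
  exact ContinuousLinearMap.ext fun w => le_antisymm (hle w) (by simpa using hle (-w))

theorem exists_norm_le_of_apply_self_eq
    (hcoer : ∀ K : ℝ, ∃ R : ℝ, ∀ u : X, R ≤ ‖u‖ → K * ‖u‖ ≤ T u u) (b : StrongDual ℝ X) :
    ∃ C, ∀ u, T u u = b u → ‖u‖ ≤ C := by
  obtain ⟨R, hR⟩ := hcoer (‖b‖ + 1)
  refine ⟨max R 0, fun u hu => ?_⟩
  by_contra! hlt
  have h₁ := hR u ((le_max_left _ _).trans hlt.le)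
  have h₂ := (le_abs_self (b u)).trans (b.le_opNorm u)
  have h₃ := (le_max_right R 0).trans_lt hlt
  nlinarith

theorem exists_galerkin_solution (hmono : ∀ u v : X, 0 ≤ T u (u - v) - T v (u - v))
    (hcoer : ∀ K : ℝ, ∃ R : ℝ, ∀ u : X, R ≤ ‖u‖ → K * ‖u‖ ≤ T u u)
    (hbnd : ∀ r : ℝ, ∃ M : ℝ, ∀ u : X, ‖u‖ ≤ r → ‖T u‖ ≤ M)
    (hhemi : ∀ u v w : X, Continuous (fun t : ℝ => T (u + t • v) w)) (b : StrongDual ℝ X)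
    (V : Submodule ℝ X) [FiniteDimensional ℝ V] : ∃ u ∈ V, ∀ v ∈ V, T u v = b v := by
  obtain ⟨R, hR⟩ := hcoer ‖b‖
  obtain ⟨x, hx⟩ :=
    exists_eq_zero_of_monotone_strongDual (F := fun x : V => (T x - b).comp V.subtypeL)
    (fun w => ((continuous_apply_of_monotone hmono hbnd hhemi w).comp continuous_subtype_val).sub
      continuous_const)
    (fun x y => by simpa using hmono x y)
    (by
      filter_upwards [tendsto_norm_cocompact_atTop.eventually_ge_atTop R] with x hx
      have := (le_abs_self (b x)).trans (b.le_opNorm x)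
      simp only [ContinuousLinearMap.comp_apply, Submodule.subtypeL_apply,
        FunLike.coe_sub, Pi.sub_apply, sub_nonneg]
      linarith [hR x hx])
  exact ⟨x, x.2, fun v hv => by simpa [sub_eq_zero] using congr($hx ⟨v, hv⟩)⟩

theorem exists_mapClusterPt_toWeakSpace
    (hrefl : Function.Surjective (NormedSpace.inclusionInDoubleDual ℝ X)) {ι : Type*}
    {l : Filter ι} [l.NeBot] {f : ι → X} (hf : Bornology.IsBounded (Set.range f)) :
    ∃ u : X, MapClusterPt (toWeakSpace ℝ X u) l (toWeakSpace ℝ X ∘ f) := by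
  have hcpt := NormedSpace.isCompact_closure_of_isBounded ℝ X (Set.range (toWeakSpace ℝ X ∘ f))
    (by rwa [Set.range_comp, Set.preimage_image_eq _ (toWeakSpace ℝ X).injective])
    (fun ξ _ => hrefl ξ)
  obtain ⟨u, -, hu⟩ := hcpt.exists_mapClusterPt (f := l) (u := toWeakSpace ℝ X ∘ f)
    (le_principal_iff.2 (mem_map.2 (univ_mem' fun i => subset_closure (Set.mem_range_self i))))
  exact ⟨u, hu⟩

theorem exists_apply_eq_of_monotone
    (hrefl : Function.Surjective (NormedSpace.inclusionInDoubleDual ℝ X))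
    (hmono : ∀ u v : X, 0 ≤ T u (u - v) - T v (u - v))
    (hcoer : ∀ K : ℝ, ∃ R : ℝ, ∀ u : X, R ≤ ‖u‖ → K * ‖u‖ ≤ T u u)
    (hbnd : ∀ r : ℝ, ∃ M : ℝ, ∀ u : X, ‖u‖ ≤ r → ‖T u‖ ≤ M)
    (hhemi : ∀ u v w : X, Continuous (fun t : ℝ => T (u + t • v) w)) (b : StrongDual ℝ X) :
    ∃ u, T u = b := by
  choose u hmem hu using fun s : Finset X =>
    exists_galerkin_solution hmono hcoer hbnd hhemi b (span ℝ (s : Set X))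
  obtain ⟨C, hC⟩ := exists_norm_le_of_apply_self_eq hcoer b
  obtain ⟨u₀, hu₀⟩ := exists_mapClusterPt_toWeakSpace hrefl (l := atTop) (f := u)
    (isBounded_iff_forall_norm_le.2 ⟨C, Set.forall_mem_range.2 fun s => hC _ (hu s _ (hmem s))⟩)
  refine ⟨u₀, eq_of_forall_apply_sub_nonneg hhemi fun v => ?_⟩
  have hev : ∀ᶠ s in atTop, (b - T v) v ≤ (b - T v) (u s) := by
    filter_upwards [eventually_ge_atTop {v}] with s hs
    have hv : v ∈ span ℝ (s : Set X) := subset_span (by simpa using hs)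
    have hb := hu s _ (sub_mem (hmem s) hv)
    have hm := hmono (u s) v
    simp only [map_sub, FunLike.coe_sub, Pi.sub_apply] at hb hm ⊢
    linarith
  have hlim : (b - T v) v ≤ (b - T v) u₀ :=
    (isClosed_le continuous_const (WeakBilin.eval_continuous _ (b - T v))).mem_of_mapClusterPt
      hu₀ hev
  rw [map_sub]
  exact sub_nonneg.2 hlim

end MonotoneOperator

theorem browder_minty_general
    (X : Type*) [NormedAddCommGroup X] [NormedSpace ℝ X]
    (hrefl : Function.Surjective (NormedSpace.inclusionInDoubleDual ℝ X))
    (T : X → StrongDual ℝ X)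
    (hmono : ∀ u v : X, 0 ≤ T u (u - v) - T v (u - v))
    (hcoer : ∀ K : ℝ, ∃ R : ℝ, ∀ u : X, R ≤ ‖u‖ → K * ‖u‖ ≤ T u u)
    (hbnd : ∀ r : ℝ, ∃ M : ℝ, ∀ u : X, ‖u‖ ≤ r → ‖T u‖ ≤ M)
    (hhemi : ∀ u v w : X, Continuous (fun t : ℝ => T (u + t • v) w)) :
    (∀ b : StrongDual ℝ X, ∃ u : X, T u = b) ∧
    ((∀ u v : X, u ≠ v → 0 < T u (u - v) - T v (u - v)) →
      ∀ b : StrongDual ℝ X, ∃! u : X, T u = b) := by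
  have hex := exists_apply_eq_of_monotone hrefl hmono hcoer hbnd hhemi
  refine ⟨hex, fun hstrict b => ?_⟩
  obtain ⟨u, hu⟩ := hex b
  refine ⟨u, hu, fun v hv => by_contra fun hne => ?_⟩
  simpa [hu, hv] using hstrict v u hne

/-- Browder–Minty theorem: on a real reflexive Banach space X, a monotone, coercive, bounded,
hemicontinuous operator T : X → X* is surjective; if T is strictly monotone the solution
to T(u) = b is unique. -/
theorem browder_minty
    (X : Type*) [NormedAddCommGroup X] [NormedSpace ℝ X] [CompleteSpace X]
    (hrefl : Function.Surjective (NormedSpace.inclusionInDoubleDual ℝ X))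
    (T : X → StrongDual ℝ X)
    (hmono : ∀ u v : X, 0 ≤ T u (u - v) - T v (u - v))
    (hcoer : ∀ K : ℝ, ∃ R : ℝ, ∀ u : X, R ≤ ‖u‖ → K * ‖u‖ ≤ T u u)
    (hbnd : ∀ r : ℝ, ∃ M : ℝ, ∀ u : X, ‖u‖ ≤ r → ‖T u‖ ≤ M)
    (hhemi : ∀ u v w : X, Continuous (fun t : ℝ => T (u + t • v) w)) :
    (∀ b : StrongDual ℝ X, ∃ u : X, T u = b) ∧
    ((∀ u v : X, u ≠ v → 0 < T u (u - v) - T v (u - v)) →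
      ∀ b : StrongDual ℝ X, ∃! u : X, T u = b) :=
  browder_minty_general X hrefl T hmono hcoer hbnd hhemi
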